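/- Let F be an algebraically closed field of prime characteristic p, V a finite-dimensional F-vector space, and u an F-linear endomorphism of V. Let r = ord(u) and f_u(t) = ∏_{λ ∈ Λ(u)} (t − λ). Then there exists a minimal natural number k such that u^{p^k} is semisimple, and for this k the polynomial f_u(t)^{p^k} is the minimal p-polynomial of u: f_u(u)^{p^k} = 0 (i.e., evaluating f_u^{p^k} at u gives 0), and every nonzero p-polynomial g with g(u) = 0 has degree at least p^{r+k}. -/

import Mathlib

attribute [local instance] ZMod.algebra

/-- `Λ(u)`: the `𝔽_p`-subspace of `F` spanned by the eigenvalues of `u`. -/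
noncomputable def pLambda (p : ℕ) {F : Type} [Field F] [CharP F p]
    {V : Type} [AddCommGroup V] [Module F V] (u : Module.End F V) :
    Submodule (ZMod p) F :=
  Submodule.span (ZMod p) {μ : F | Module.End.HasEigenvalue u μ}

/-- The `p`-order of `u`: the dimension of `Λ(u)` over the prime field `𝔽_p`. -/
noncomputable def pOrd (p : ℕ) {F : Type} [Field F] [CharP F p]
    {V : Type} [AddCommGroup V] [Module F V] (u : Module.End F V) : ℕ :=
  Module.finrank (ZMod p) (pLambda p u)

/-- A `p`-polynomial: a polynomial of the form `a_0 t + a_1 t^p + ⋯ + a_k t^(p^k)`. -/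
def IsPPoly (p : ℕ) {F : Type} [Field F] (f : Polynomial F) : Prop :=
  ∃ (k : ℕ) (a : ℕ → F),
    f = ∑ j ∈ Finset.range (k + 1), Polynomial.C (a j) * Polynomial.X ^ p ^ j

/-! Write `u = s + n` (Jordan–Chevalley). In characteristic `p`,
`(s + n)^(p^j) = s^(p^j) + n^(p^j)`, so `u^(p^j)` is semisimple exactly when `n^(p^j) = 0`, and `k`
is the least such `j`. Then `u^(p^k) = s^(p^k)`, and `f_u` kills `s`, so `f_u^(p^k)` kills `u`.
Conversely, a `p`-polynomial `g` is additive on commuting elements, so `g(u) = g(s) + g(n)` with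
`g(s)` semisimple and `g(n)` nilpotent; hence `g(n) = 0`, which forces `X^(p^k) ∣ g`. Additivity
also makes the roots of `g` an `𝔽_p`-subspace, so `g` vanishes on `Λ(u)`, and
`g(X + c) = g(X)` for `c ∈ Λ(u)`; thus `(X - c)^(p^k) ∣ g` for each of the `p^r` elements
`c` of `Λ(u)`. -/

open Polynomial Module Module.End

theorem Algebra.add_pow_char_pow_of_commute {p : ℕ} [Fact p.Prime] (F : Type*) [Field F]
    [CharP F p] {A : Type*} [Ring A] [Algebra F A] {x y : A} (h : Commute x y) (n : ℕ) :
    (x + y) ^ p ^ n = x ^ p ^ n + y ^ p ^ n := by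
  obtain ⟨r, hr⟩ := h.exists_add_pow_prime_pow_eq (Fact.out : p.Prime) n
  have hp : (p : A) = 0 := by rw [← map_natCast (algebraMap F A), CharP.cast_eq_zero, map_zero]
  simp [hr, hp]

theorem Polynomial.aeval_pow_char_pow_eq_of_pow_eq {p : ℕ} [Fact p.Prime] {F : Type*} [Field F]
    [CharP F p] {A : Type*} [Semiring A] [Algebra F A] {x y : A} {k : ℕ}
    (h : x ^ p ^ k = y ^ p ^ k) (f : F[X]) : aeval x (f ^ p ^ k) = aeval y (f ^ p ^ k) := by
  simp only [← map_iterateFrobenius_expand p f k, map_expand, expand_aeval, h]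

section Field

variable {F : Type*} [Field F] {V : Type*} [AddCommGroup V] [Module F V]

theorem IsNilpotent.exists_X_pow_dvd_of_aeval_eq_zero {A : Type*} [Ring A] [Algebra F A]
    {n : A} (hn : IsNilpotent n) {g : F[X]} (hg : aeval n g = 0) :
    ∃ i, X ^ i ∣ g ∧ n ^ i = 0 := by
  obtain ⟨m, hm⟩ := hn
  have hint : IsIntegral F n := ⟨X ^ m, monic_X_pow m, by simp [hm]⟩
  obtain ⟨i, -, hi⟩ := (dvd_prime_pow prime_X m).mp (minpoly.dvd F n (by simp [hm]))
  have hmin : minpoly F n = X ^ i :=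
    eq_of_monic_of_associated (minpoly.monic hint) (monic_X_pow i) hi
  refine ⟨i, hmin ▸ minpoly.dvd F n hg, ?_⟩
  simpa [hmin] using minpoly.aeval F n

variable [FiniteDimensional F V]

theorem Module.End.HasEigenvalue.add_of_isNilpotent {s n : End F V} {μ : F}
    (hμ : s.HasEigenvalue μ) (hn : IsNilpotent n) (hsn : Commute s n) :
    (s + n).HasEigenvalue μ := by
  rw [hasEigenvalue_iff_mem_spectrum, spectrum.mem_iff] at hμ ⊢
  intro hunit
  have hcomm : Commute n (algebraMap F _ μ - (s + n)) :=
    (Algebra.commute_algebraMap_right μ n).sub_right (hsn.symm.add_right (Commute.refl n))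
  exact hμ (by simpa [sub_add] using hn.isUnit_add_left_of_commute hunit hcomm)

theorem Module.End.IsSemisimple.aeval_eq_zero_of_forall_isRoot [IsAlgClosed F] {s : End F V}
    (hs : s.IsSemisimple) {f : F[X]} (hf : ∀ μ, s.HasEigenvalue μ → f.IsRoot μ) :
    aeval s f = 0 := by
  rcases eq_or_ne f 0 with rfl | hf0
  · exact map_zero _
  have hsplit : minpoly F s = ((minpoly F s).roots.map (X - C ·)).prod :=
    (IsAlgClosed.splits _).eq_prod_roots_of_monic (minpoly.monic (Algebra.IsIntegral.isIntegral s))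
  have hnodup : (minpoly F s).roots.Nodup :=
    nodup_roots (PerfectField.separable_iff_squarefree.mpr hs.minpoly_squarefree)
  rw [← minpoly.dvd_iff, hsplit, Multiset.prod_X_sub_C_dvd_iff_le_roots hf0,
    Multiset.le_iff_subset hnodup]
  intro μ hμ
  exact (mem_roots hf0).mpr (hf μ (hasEigenvalue_iff_isRoot.mpr (isRoot_of_mem_roots hμ)))

theorem Module.End.IsSemisimple.aeval_prod_X_sub_C_eq_zero [IsAlgClosed F] {s : End F V}
    (hs : s.IsSemisimple) {S : Finset F} (hS : ∀ μ, s.HasEigenvalue μ → μ ∈ S) :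
    aeval s (∏ c ∈ S, (X - C c)) = 0 :=
  hs.aeval_eq_zero_of_forall_isRoot fun μ hμ ↦ by
    simpa [eval_prod] using Finset.prod_eq_zero (hS μ hμ) (sub_self μ)

end Field

section CharP

variable {p : ℕ} [Fact p.Prime] {F : Type*} [Field F] [CharP F p]

theorem Module.End.isSemisimple_add_pow_char_pow_iff [PerfectField F] {V : Type*}
    [AddCommGroup V] [Module F V] [FiniteDimensional F V] {s n : End F V} (hs : s.IsSemisimple)
    (hn : IsNilpotent n) (hsn : Commute s n) (j : ℕ) :
    ((s + n) ^ p ^ j).IsSemisimple ↔ n ^ p ^ j = 0 := by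
  rw [Algebra.add_pow_char_pow_of_commute F hsn]
  refine ⟨fun h ↦ eq_zero_of_isNilpotent_isSemisimple
    (hn.pow_of_pos (pow_ne_zero _ (Fact.out : p.Prime).ne_zero)) ?_, fun h ↦ ?_⟩
  · simpa using h.sub_of_commute ((Commute.refl _).add_left (hsn.pow_pow _ _).symm) (hs.pow _)
  · simpa [h] using hs.pow _

end CharP

namespace IsPPoly

variable {p : ℕ} {F : Type} [Field F] {g : F[X]}

theorem coeff_eq_zero (hg : IsPPoly p g) {d : ℕ} (hd : ∀ j, d ≠ p ^ j) : g.coeff d = 0 := by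
  obtain ⟨m, a, rfl⟩ := hg
  simp [coeff_C_mul, coeff_X_pow, hd]

theorem X_pow_dvd_of_X_pow_dvd (hp : 1 < p) (hg : IsPPoly p g) {i k : ℕ} (hi : X ^ i ∣ g)
    (hk : ∀ j < k, p ^ j < i) : X ^ p ^ k ∣ g := by
  refine X_pow_dvd_iff.mpr fun d hd ↦ ?_
  by_cases hdp : ∃ j, d = p ^ j
  · obtain ⟨j, rfl⟩ := hdp
    exact X_pow_dvd_iff.mp hi _ (hk j ((Nat.pow_lt_pow_iff_right hp).mp hd))
  · exact hg.coeff_eq_zero (not_exists.mp hdp)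

theorem isNilpotent_aeval (hp : p ≠ 0) (hg : IsPPoly p g) {A : Type*} [Ring A] [Algebra F A]
    {n : A} (hn : IsNilpotent n) : IsNilpotent (aeval n g) := by
  obtain ⟨h, rfl⟩ : X ∣ g := X_dvd_iff.mpr
    (hg.coeff_eq_zero fun j ↦ (pow_ne_zero j hp).symm)
  rw [map_mul]
  exact ((commute_X h).map (aeval n)).isNilpotent_mul_right (by rwa [aeval_X])

theorem X_pow_dvd_of_aeval_eq_zero (hp : 1 < p) (hg : IsPPoly p g) {A : Type*} [Ring A]
    [Algebra F A] {n : A} (hn : IsNilpotent n) {k : ℕ} (hk : ∀ j < k, n ^ p ^ j ≠ 0)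
    (h : aeval n g = 0) : X ^ p ^ k ∣ g := by
  obtain ⟨i, hi, hni⟩ := hn.exists_X_pow_dvd_of_aeval_eq_zero h
  exact hg.X_pow_dvd_of_X_pow_dvd hp hi fun j hj ↦
    lt_of_not_ge fun hij ↦ hk j hj (pow_eq_zero_of_le hij hni)

variable [Fact p.Prime] [CharP F p]

theorem aeval_add (hg : IsPPoly p g) {A : Type*} [Ring A] [Algebra F A] {x y : A}
    (h : Commute x y) : aeval (x + y) g = aeval x g + aeval y g := by
  obtain ⟨m, a, rfl⟩ := hg
  simp [Algebra.add_pow_char_pow_of_commute F h, mul_add, Finset.sum_add_distrib]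

theorem eval_add (hg : IsPPoly p g) (x y : F) : g.eval (x + y) = g.eval x + g.eval y := by
  simpa using hg.aeval_add (Commute.all x y)

theorem comp_X_add_C (hg : IsPPoly p g) (c : F) : g.comp (X + C c) = g + C (g.eval c) := by
  rw [comp_eq_aeval, hg.aeval_add (Commute.all X (C c)), aeval_X_left_apply, ← algebraMap_eq,
    aeval_algebraMap_apply_eq_algebraMap_eval]

theorem X_sub_C_pow_dvd (hg : IsPPoly p g) {c : F} (hc : g.eval c = 0) {m : ℕ} (h : X ^ m ∣ g) :
    (X - C c) ^ m ∣ g := by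
  rwa [X_sub_C_pow_dvd_iff, hg.comp_X_add_C, hc, C_0, add_zero]

theorem eval_eq_zero_of_mem_span (hg : IsPPoly p g) {s : Set F} (hs : ∀ x ∈ s, g.eval x = 0)
    {c : F} (hc : c ∈ Submodule.span (ZMod p) s) : g.eval c = 0 := by
  let φ : F →+ F := AddMonoidHom.mk' g.eval hg.eval_add
  have hle : Submodule.span (ZMod p) s ≤ AddSubgroup.toZModSubmodule p φ.ker :=
    Submodule.span_le.mpr fun x hx ↦ hs x hx
  exact hle hc

theorem prod_X_sub_C_pow_dvd (hg : IsPPoly p g) (S : Finset F) (hS : ∀ c ∈ S, g.eval c = 0)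
    {m : ℕ} (h : X ^ m ∣ g) : (∏ c ∈ S, (X - C c)) ^ m ∣ g := by
  rw [← Finset.prod_pow]
  exact Finset.prod_dvd_of_coprime
    (fun c _ d _ hcd ↦ (pairwise_coprime_X_sub_C Function.injective_id hcd).pow)
    fun c hc ↦ hg.X_sub_C_pow_dvd (hS c hc) h

variable {V : Type} [AddCommGroup V] [Module F V]

theorem eval_eq_zero_of_mem_pLambda (hg : IsPPoly p g) {u : End F V} (h : aeval u g = 0)
    {c : F} (hc : c ∈ pLambda p u) : g.eval c = 0 :=
  hg.eval_eq_zero_of_mem_span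
    (fun _ hμ ↦ (isRoot_of_hasEigenvalue hμ).dvd (minpoly.dvd F u h)) hc

variable [FiniteDimensional F V]

theorem aeval_eq_zero_of_aeval_add_eq_zero [PerfectField F] (hg : IsPPoly p g) {s n : End F V}
    (hs : s.IsSemisimple) (hn : IsNilpotent n) (hsn : Commute s n) (h : aeval (s + n) g = 0) :
    aeval n g = 0 := by
  have hsum := hg.aeval_add hsn
  have hs0 : aeval s g = 0 := by
    refine eq_zero_of_isNilpotent_isSemisimple ?_ (hs.aeval g)
    rw [eq_neg_of_add_eq_zero_left (hsum.symm.trans h)]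
    exact (hg.isNilpotent_aeval (Fact.out : p.Prime).ne_zero hn).neg
  rwa [hsum, hs0, zero_add] at h

end IsPPoly

theorem Finset.card_eq_pow_pOrd {p : ℕ} [Fact p.Prime] {F : Type} [Field F] [CharP F p] {V : Type}
    [AddCommGroup V] [Module F V] {u : End F V} {S : Finset F}
    (hS : (S : Set F) = pLambda p u) : S.card = p ^ pOrd p u := by
  have : Finite (pLambda p u) := Finite.of_equiv S (Equiv.setCongr hS)
  have hcard := Module.natCard_eq_pow_finrank (K := ZMod p) (V := pLambda p u)
  rw [Nat.card_zmod] at hcard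
  rw [pOrd, ← hcard, ← Nat.card_eq_finsetCard]
  exact Nat.card_congr (Equiv.setCongr hS)

/-- For an endomorphism `u` with `p`-order `r` and
`f_u(t) = ∏_{λ ∈ Λ(u)} (t − λ)`, there is a minimal `k` with `u^(p^k)` semisimple, and then
`f_u^(p^k)` is the minimal `p`-polynomial of `u`: it annihilates `u` and every nonzero
`p`-polynomial annihilating `u` has degree at least `p^(r+k)`. -/
theorem exists_minimal_semisimple_power_and_minimal_pPolynomial
    (p : ℕ) (hp : p.Prime) (F : Type) [Field F] [IsAlgClosed F] [CharP F p]
    (V : Type) [AddCommGroup V] [Module F V] [FiniteDimensional F V]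
    (u : Module.End F V)
    (S : Finset F) (hS : (S : Set F) = (pLambda p u : Set F))
    (f : Polynomial F) (hf : f = ∏ c ∈ S, (Polynomial.X - Polynomial.C c)) :
    ∃ k : ℕ, (u ^ p ^ k).IsSemisimple ∧ (∀ j < k, ¬ (u ^ p ^ j).IsSemisimple) ∧
      Polynomial.aeval u (f ^ p ^ k) = 0 ∧
      ∀ g : Polynomial F, IsPPoly p g → g ≠ 0 → Polynomial.aeval u g = 0 →
        p ^ (pOrd p u + k) ≤ g.natDegree := by
  classical
  have : Fact p.Prime := ⟨hp⟩
  obtain ⟨n, hn_mem, s, hs_mem, hn, hs, hu⟩ := u.exists_isNilpotent_isSemisimple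
  have hsn : Commute s n := Algebra.commute_of_mem_adjoin_singleton_of_commute hn_mem
    (Algebra.commute_of_mem_adjoin_self hs_mem).symm
  rw [add_comm] at hu
  subst hu
  have hsemi := isSemisimple_add_pow_char_pow_iff hs hn hsn
  have hex : ∃ k, ((s + n) ^ p ^ k).IsSemisimple := by
    obtain ⟨m, hm⟩ := hn
    exact ⟨m, (hsemi m).mpr (pow_eq_zero_of_le (Nat.lt_pow_self hp.one_lt).le hm)⟩
  have hnk : n ^ p ^ Nat.find hex = 0 := (hsemi _).mp (Nat.find_spec hex)
  have hmin : ∀ j < Nat.find hex, ¬ ((s + n) ^ p ^ j).IsSemisimple := fun j ↦ Nat.find_min hex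
  refine ⟨Nat.find hex, Nat.find_spec hex, hmin, ?_, fun g hg hg0 hgu ↦ ?_⟩
  · have hfs : aeval s f = 0 := hf ▸ hs.aeval_prod_X_sub_C_eq_zero fun μ hμ ↦ by
      rw [← Finset.mem_coe, hS]
      exact Submodule.subset_span (hμ.add_of_isNilpotent hn hsn)
    have hpow : (s + n) ^ p ^ Nat.find hex = s ^ p ^ Nat.find hex := by
      rw [Algebra.add_pow_char_pow_of_commute F hsn, hnk, add_zero]
    rw [aeval_pow_char_pow_eq_of_pow_eq hpow, map_pow, hfs, zero_pow (pow_ne_zero _ hp.ne_zero)]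
  · have hXk : X ^ p ^ Nat.find hex ∣ g :=
      hg.X_pow_dvd_of_aeval_eq_zero hp.one_lt hn (fun j hj ↦ (hsemi j).not.mp (hmin j hj))
        (hg.aeval_eq_zero_of_aeval_add_eq_zero hs hn hsn hgu)
    have hdvd : f ^ p ^ Nat.find hex ∣ g := hf ▸ hg.prod_X_sub_C_pow_dvd S
      (fun c hc ↦ hg.eval_eq_zero_of_mem_pLambda hgu (by rwa [← SetLike.mem_coe, ← hS])) hXk
    calc _ = (f ^ p ^ Nat.find hex).natDegree := by
          rw [natDegree_pow, hf, natDegree_finsetProd_X_sub_C_eq_card, S.card_eq_pow_pOrd hS,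
            pow_add, mul_comm]
      _ ≤ g.natDegree := natDegree_le_of_dvd hdvd hg0
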